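/- For all integers 1 ≤ b < a ≤ j ≤ n, f([a:n],{j}) − ℓ_{a−1,s} ≥ f([b:n],{j}) − ℓ_{b−1,s}. -/

import Mathlib

open Finset

/-- The η×η shift-type block `D^{η−m}` over GF(2): entry (i,j) is 1 iff
`j < m` and `i = j + (η − m)`. -/
def Dblk (η m : ℕ) : Matrix (Fin η) (Fin η) (ZMod 2) :=
  Matrix.of fun i j => if (j : ℕ) < m ∧ (i : ℕ) = (j : ℕ) + (η - m) then 1 else 0

/-- Row-block index set of the transfer matrix: `{d} ∪ (Ωᶜ ∩ Sᶜ)`, with `0`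
playing the role of the destination `d` and relays being `1,…,n`. -/
def rowIdx (n : ℕ) (Ω S : Finset ℕ) : Finset ℕ :=
  insert 0 ((Finset.Icc 1 n \ Ω) \ S)

/-- Column-block index set of the transfer matrix: `{s} ∪ (Ω ∩ S)`, with `0`
playing the role of the source `s`. -/
def colIdx (Ω S : Finset ℕ) : Finset ℕ :=
  insert 0 (Ω ∩ S)

/-- `f(Ω,S)`: rank over GF(2) of the transfer matrix `F_{Ω,S}`, whose block in
row block `i` and column block `j` is `D^{η−ℓ i j}` (here `ℓ i j` encodes
`ℓ_{i,j}`, with index `0` standing for `d` in the first slot and for `s` in the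
second slot). -/
noncomputable def fRank (n η : ℕ) (ℓ : ℕ → ℕ → ℕ) (Ω S : Finset ℕ) : ℕ :=
  Matrix.rank
    (Matrix.of fun (p : ↥(rowIdx n Ω S) × Fin η) (q : ↥(colIdx Ω S) × Fin η) =>
      Dblk η (ℓ (p.1 : ℕ) (q.1 : ℕ)) p.2 q.2)

/-- The `(n+2) × (n+2)` real matrix `P`. -/
noncomputable def Pmat (n η : ℕ) (ℓ : ℕ → ℕ → ℕ) : Matrix (Fin (n+2)) (Fin (n+2)) ℝ :=
  Matrix.of fun i j =>
    if (i : ℕ) = 0 then (if (j : ℕ) = 0 then 0 else 1)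
    else if (j : ℕ) = 0 then 1
    else -(fRank n η ℓ (Finset.Icc (i : ℕ) n)
        (if (j : ℕ) = n + 1 then (∅ : Finset ℕ) else {(j : ℕ)}) : ℝ)

/-- `P̃_i`: determinant of the submatrix of `P` obtained by deleting row `0`
and column `i`. -/
noncomputable def Pminor (n η : ℕ) (ℓ : ℕ → ℕ → ℕ) (i : Fin (n+2)) : ℝ :=
  ((Pmat n η ℓ).submatrix Fin.succ i.succAbove).det

/-- Feasibility for the LP defining the approximate capacity `C^LD`. -/
def FeasLD (n η : ℕ) (ℓ : ℕ → ℕ → ℕ) (t : ℝ) (lam : Finset ℕ → ℝ) : Prop :=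
  (∀ S ⊆ Finset.Icc 1 n, 0 ≤ lam S) ∧
  (∑ S ∈ (Finset.Icc 1 n).powerset, lam S) ≤ 1 ∧
  ∀ Ω ⊆ Finset.Icc 1 n,
    t ≤ ∑ S ∈ (Finset.Icc 1 n).powerset, lam S * (fRank n η ℓ Ω S : ℝ)

/-- The approximate capacity `C^LD`. -/
noncomputable def CLD (n η : ℕ) (ℓ : ℕ → ℕ → ℕ) : ℝ :=
  sSup {t : ℝ | ∃ lam, FeasLD n η ℓ t lam}

/-- Feasibility for the relaxed LP defining `C^U`. -/
def FeasU (n η : ℕ) (ℓ : ℕ → ℕ → ℕ) (t : ℝ) (lam : Finset ℕ → ℝ) : Prop :=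
  (∀ S ⊆ Finset.Icc 1 n, 0 ≤ lam S) ∧
  (∑ S ∈ (Finset.Icc 1 n).powerset, lam S) ≤ 1 ∧
  ∀ i ∈ Finset.Icc 1 (n+1),
    t ≤ ∑ S ∈ (Finset.Icc 1 n).powerset, lam S * (fRank n η ℓ (Finset.Icc i n) S : ℝ)

/-- The relaxed value `C^U`. -/
noncomputable def CU (n η : ℕ) (ℓ : ℕ → ℕ → ℕ) : ℝ :=
  sSup {t : ℝ | ∃ lam, FeasU n η ℓ t lam}

/-- The set `Ŝ = {∅, {1}, …, {n}}` of states with at most one relay transmitting. -/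
def SHat (n : ℕ) : Finset (Finset ℕ) :=
  insert ∅ ((Finset.Icc 1 n).image fun i => {i})

open Fin.NatCast in
/-- The schedule `λ*` induced by a solution vector `v = (t*, λ*_{{1}}, …, λ*_{{n}}, λ*_∅)`
of the linear system `P·v = e₀`: it assigns `v i` to the state `{i}` (for `i ∈ [n]`),
`v (n+1)` to `∅`, and `0` to any other state. -/
noncomputable def lamStar (n : ℕ) (v : Fin (n+2) → ℝ) (S : Finset ℕ) : ℝ :=
  (if S = ∅ then v (Fin.last (n+1)) else 0) +
  ∑ i ∈ Finset.Icc 1 n, if S = {i} then v (i : Fin (n+2)) else 0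

/-!
Since `a ≤ j`, both transfer matrices have the column blocks `{s, j}`, and `F_{[b:n],{j}}` is
`F_{[a:n],{j}}` with the row blocks `b, …, a - 1` deleted. By monotonicity of `ℓ_{·,s}`, the
source columns `ℓ_{b-1,s}, …, ℓ_{a-1,s} - 1` vanish on every remaining row, while row block
`a - 1` restricts to an identity matrix on them. These `ℓ_{a-1,s} - ℓ_{b-1,s}` independent columns
are lost in the deletion, and the rank drops by at least that much.
-/

open Module

theorem Submodule.finrank_map_add_card_le {K W W' ι : Type*} [Field K] [AddCommGroup W]
    [Module K W] [FiniteDimensional K W] [AddCommGroup W'] [Module K W'] [Fintype ι]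
    (V : Submodule K W) (π : W →ₗ[K] W') (x : ι → W) (hxV : ∀ i, x i ∈ V)
    (hxπ : ∀ i, π (x i) = 0) (hx : LinearIndependent K x) :
    finrank K (V.map π) + Fintype.card ι ≤ finrank K V := by
  let πV := π.domRestrict V
  have hker : ∀ i, (⟨x i, hxV i⟩ : V) ∈ LinearMap.ker πV := hxπ
  have hx' : LinearIndependent K fun i => (⟨⟨x i, hxV i⟩, hker i⟩ : LinearMap.ker πV) :=
    LinearIndependent.of_comp (V.subtype ∘ₗ (LinearMap.ker πV).subtype) hx
  rw [← LinearMap.range_domRestrict, ← πV.finrank_range_add_finrank_ker]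
  exact Nat.add_le_add_left hx'.fintype_card_le_finrank _

theorem Matrix.rank_submatrix_add_card_le {F m n m₀ n₀ ι : Type*} [Field F] [Fintype m]
    [Fintype n] [Fintype n₀] [Fintype ι] (M : Matrix m n F) (r : m₀ → m) (c : n₀ → n)
    (v : ι → n) (hv : ∀ i p, M (r p) (v i) = 0) (hind : LinearIndependent F fun i => M.col (v i)) :
    (M.submatrix r c).rank + Fintype.card ι ≤ M.rank := by
  rw [M.rank_eq_finrank_span_cols]
  refine le_trans ?_ (Submodule.finrank_map_add_card_le _ (LinearMap.funLeft F F r) _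
    (fun i => Submodule.subset_span ⟨v i, rfl⟩) (fun i => funext (hv i)) hind)
  rw [rank_eq_finrank_span_cols]
  refine Nat.add_le_add_right (Submodule.finrank_mono ?_) _
  rw [Submodule.span_le]
  rintro _ ⟨q, rfl⟩
  exact ⟨M.col (c q), Submodule.subset_span ⟨c q, rfl⟩, rfl⟩

theorem Dblk_apply_of_le {η m : ℕ} {i j : Fin η} (h : m ≤ j) : Dblk η m i j = 0 :=
  if_neg fun hj => (Nat.not_lt.2 h) hj.1

theorem Dblk_apply_of_lt {η m : ℕ} {i j : Fin η} (h : (j : ℕ) < m) :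
    Dblk η m i j = if (i : ℕ) = j + (η - m) then 1 else 0 := by
  simp only [Dblk, Matrix.of_apply, h, true_and]

section TransferMatrix

variable (n η : ℕ) (ℓ : ℕ → ℕ → ℕ)

def transferMatrix (Ω S : Finset ℕ) :
    Matrix (↥(rowIdx n Ω S) × Fin η) (↥(colIdx Ω S) × Fin η) (ZMod 2) :=
  Matrix.of fun p q => Dblk η (ℓ p.1 q.1) p.2 q.2

theorem fRank_eq_rank_transferMatrix (Ω S : Finset ℕ) :
    fRank n η ℓ Ω S = (transferMatrix n η ℓ Ω S).rank :=
  rfl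

variable {n η ℓ}

theorem zero_mem_colIdx (Ω S : Finset ℕ) : 0 ∈ colIdx Ω S :=
  mem_insert_self _ _

theorem rowIdx_subset_rowIdx {Ω Ω' : Finset ℕ} (h : Ω' ⊆ Ω) (S : Finset ℕ) :
    rowIdx n Ω S ⊆ rowIdx n Ω' S :=
  insert_subset_insert _ (sdiff_subset_sdiff (sdiff_subset_sdiff le_rfl h) le_rfl)

theorem colIdx_subset_colIdx {Ω S Ω' S' : Finset ℕ} (h : Ω ∩ S ⊆ Ω' ∩ S') :
    colIdx Ω S ⊆ colIdx Ω' S' :=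
  insert_subset_insert _ h

theorem transferMatrix_submatrix {Ω S Ω' S' : Finset ℕ} (hrow : rowIdx n Ω S ⊆ rowIdx n Ω' S')
    (hcol : colIdx Ω S ⊆ colIdx Ω' S') :
    (transferMatrix n η ℓ Ω' S').submatrix (fun p => (⟨p.1, hrow p.1.2⟩, p.2))
      (fun q => (⟨q.1, hcol q.1.2⟩, q.2)) = transferMatrix n η ℓ Ω S :=
  rfl

/-- The source columns `L₀, …, ℓ r 0 - 1` vanish on every row block of `F_{Ω,S}`, while row
block `r` restricts to an identity matrix on them. -/
theorem fRank_add_le_fRank {Ω S Ω' S' : Finset ℕ} (hrow : rowIdx n Ω S ⊆ rowIdx n Ω' S')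
    (hcol : colIdx Ω S ⊆ colIdx Ω' S') {L₀ : ℕ} (hL₀ : ∀ p ∈ rowIdx n Ω S, ℓ p 0 ≤ L₀)
    {r : ℕ} (hr : r ∈ rowIdx n Ω' S') (hrη : ℓ r 0 ≤ η) :
    fRank n η ℓ Ω S + (ℓ r 0 - L₀) ≤ fRank n η ℓ Ω' S' := by
  rw [fRank_eq_rank_transferMatrix, fRank_eq_rank_transferMatrix]
  let v : Fin (ℓ r 0 - L₀) → ↥(colIdx Ω' S') × Fin η :=
    fun t => (⟨0, zero_mem_colIdx Ω' S'⟩, ⟨L₀ + t, by omega⟩)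
  let ρ : Fin (ℓ r 0 - L₀) → ↥(rowIdx n Ω' S') × Fin η :=
    fun t => (⟨r, hr⟩, ⟨L₀ + t + (η - ℓ r 0), by omega⟩)
  have hvanish : ∀ t (p : ↥(rowIdx n Ω S) × Fin η),
      transferMatrix n η ℓ Ω' S' (⟨p.1, hrow p.1.2⟩, p.2) (v t) = 0 := fun t p =>
    Dblk_apply_of_le ((hL₀ p.1 p.1.2).trans (Nat.le_add_right _ _))
  have hrow_r_eq_single : ∀ t, LinearMap.funLeft (ZMod 2) (ZMod 2) ρ
      ((transferMatrix n η ℓ Ω' S').col (v t)) = Pi.single t 1 := by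
    intro t
    ext t'
    rw [LinearMap.funLeft_apply, Matrix.col_apply, transferMatrix, Matrix.of_apply,
      Dblk_apply_of_lt (show L₀ + (t : ℕ) < ℓ r 0 by omega), Pi.single_apply]
    simp only [ρ, v, Nat.add_right_cancel_iff, Nat.add_left_cancel_iff, Fin.val_inj]
  have hind : LinearIndependent (ZMod 2) fun t => (transferMatrix n η ℓ Ω' S').col (v t) :=
    LinearIndependent.of_comp (LinearMap.funLeft (ZMod 2) (ZMod 2) ρ) <| by
      simpa only [Function.comp_def, hrow_r_eq_single] using
        Pi.linearIndependent_single_one _ (ZMod 2)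
  rw [← transferMatrix_submatrix hrow hcol, ← Fintype.card_fin (ℓ r 0 - L₀)]
  exact (transferMatrix n η ℓ Ω' S').rank_submatrix_add_card_le _ _ v hvanish hind

end TransferMatrix

theorem stmt8_general (n η : ℕ) (ℓ : ℕ → ℕ → ℕ)
    (hbound : ∀ i ≤ n, ∀ j ≤ n, ℓ i j ≤ η)
    (hds : ℓ 0 0 = 0)
    (hmono : ∀ i j, 1 ≤ i → i ≤ j → j ≤ n → ℓ i 0 ≤ ℓ j 0)
    (a b j : ℕ) (hb : 1 ≤ b) (hba : b < a) (haj : a ≤ j) (hjn : j ≤ n) :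
    (fRank n η ℓ (Finset.Icc b n) {j} : ℤ) - (ℓ (b - 1) 0 : ℤ)
      ≤ (fRank n η ℓ (Finset.Icc a n) {j} : ℤ) - (ℓ (a - 1) 0 : ℤ) := by
  have hsource : ∀ p q, p ≤ q → q ≤ n → ℓ p 0 ≤ ℓ q 0 := by
    intro p q hpq hqn
    rcases Nat.eq_zero_or_pos p with rfl | hp
    · rw [hds]
      exact Nat.zero_le _
    · exact hmono p q hp hpq hqn
  have hrow : rowIdx n (Icc b n) {j} ⊆ rowIdx n (Icc a n) {j} :=
    rowIdx_subset_rowIdx (Icc_subset_Icc_left hba.le) {j}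
  have hcol : colIdx (Icc b n) {j} ⊆ colIdx (Icc a n) {j} :=
    colIdx_subset_colIdx fun x => by simp only [mem_inter, mem_Icc, mem_singleton]; omega
  have hL₀ : ∀ p ∈ rowIdx n (Icc b n) {j}, ℓ p 0 ≤ ℓ (b - 1) 0 := by
    intro p hp
    simp only [rowIdx, mem_insert, mem_sdiff, mem_Icc, mem_singleton] at hp
    exact hsource p (b - 1) (by omega) (by omega)
  have hr : a - 1 ∈ rowIdx n (Icc a n) {j} := by
    simp only [rowIdx, mem_insert, mem_sdiff, mem_Icc, mem_singleton]
    omega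
  have hgain := fRank_add_le_fRank hrow hcol hL₀ hr (hbound (a - 1) (by omega) 0 (Nat.zero_le n))
  have hLba := hsource (b - 1) (a - 1) (by omega) (by omega)
  omega

theorem stmt8 (n η : ℕ) (hn : 1 ≤ n) (hη : 1 ≤ η) (ℓ : ℕ → ℕ → ℕ)
    (hbound : ∀ i ≤ n, ∀ j ≤ n, ℓ i j ≤ η)
    (hds : ℓ 0 0 = 0) (hii : ∀ i, 1 ≤ i → i ≤ n → ℓ i i = 0)
    (hmono : ∀ i j, 1 ≤ i → i ≤ j → j ≤ n → ℓ i 0 ≤ ℓ j 0)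
    (a b j : ℕ) (hb : 1 ≤ b) (hba : b < a) (haj : a ≤ j) (hjn : j ≤ n) :
    (fRank n η ℓ (Finset.Icc b n) {j} : ℤ) - (ℓ (b - 1) 0 : ℤ)
      ≤ (fRank n η ℓ (Finset.Icc a n) {j} : ℤ) - (ℓ (a - 1) 0 : ℤ) :=
  stmt8_general n η ℓ hbound hds hmono a b j hb hba haj hjn
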